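/- Let k be a field, let G and G' be groups, and let V and V' be finite-dimensional k-vector spaces equipped with linear representations ρ: G → GL(V) and ρ': G' → GL(V'). Regard V ⊗ₖ V' as a representation of the product group G × G' via (g,g')·(v ⊗ v') = ρ(g)v ⊗ ρ'(g')v'. If the first group cohomology groups H¹(G, V) and H¹(G', V') both vanish, then H¹(G × G', V ⊗ₖ V') = 0. -/

import Mathlib

/-!
Restricting a 1-cocycle `c` of `G × G'` to `G` gives a cocycle with values in `V ⊗ V'` with `G`
acting on the left factor only, i.e. in `dim V'` copies of `V`; so after subtracting a
coboundary, `c` vanishes on `G`. The cocycle identity then makes `c` a function of `G'` alone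
with values in the `G`-invariants `(V ⊗ V')^G = V^G ⊗ V'`, which as a `G'`-representation is
`dim V^G` copies of `V'`, and `H¹(G', V') = 0` finishes the proof (inflation–restriction).
-/

open TensorProduct groupCohomology

universe u

namespace TensorProduct

variable {R M M₂ N ι : Type*} [CommRing R] [AddCommGroup M] [Module R M] [AddCommGroup M₂]
  [Module R M₂] [AddCommGroup N] [Module R N] [DecidableEq ι]

theorem equivFinsuppOfBasisRight_rTensor_apply (b : Module.Basis ι R N) (A : M →ₗ[R] M₂)
    (x : M ⊗[R] N) (i : ι) :
    equivFinsuppOfBasisRight b (A.rTensor N x) i = A (equivFinsuppOfBasisRight b x i) := by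
  induction x <;> simp_all

theorem sum_equivFinsuppOfBasisRight_tmul [Fintype ι] (b : Module.Basis ι R N) (x : M ⊗[R] N) :
    ∑ i, equivFinsuppOfBasisRight b x i ⊗ₜ b i = x := by
  conv_rhs => rw [← (equivFinsuppOfBasisRight b).symm_apply_apply x]
  rw [equivFinsuppOfBasisRight_symm_apply, Finsupp.sum_fintype _ _ (by simp)]

end TensorProduct

namespace Representation

section Cocycles

variable {k G V W : Type*} [CommRing k] [Group G] [AddCommGroup V] [Module k V]
  [AddCommGroup W] [Module k W] (ρ : Representation k G V)

def IsCocycle₁ (f : G → V) : Prop := ∀ g h, f (g * h) = ρ g (f h) + f g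

def IsCoboundary₁ (f : G → V) : Prop := ∃ x, ∀ g, f g = ρ g x - x

def H1Vanishes : Prop := ∀ f, ρ.IsCocycle₁ f → ρ.IsCoboundary₁ f

variable {ρ}

theorem H1Vanishes.of_retract {σ : Representation k G W} (hρ : ρ.H1Vanishes) {ι : Type*}
    [Fintype ι] (π : ι → W →ₗ[k] V) (e : ι → V →ₗ[k] W)
    (hπ : ∀ i, IsIntertwiningMap σ ρ (π i)) (he : ∀ i, IsIntertwiningMap ρ σ (e i))
    (hsum : ∀ w, ∑ i, e i (π i w) = w) : σ.H1Vanishes := by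
  intro f hf
  have hcoord : ∀ i, ρ.IsCoboundary₁ (π i ∘ f) := fun i => hρ _ fun g h => by
    simp only [Function.comp_apply, hf g h, map_add, (hπ i).isIntertwining]
  choose x hx using hcoord
  refine ⟨∑ i, e i (x i), fun g => ?_⟩
  calc f g = ∑ i, e i (π i (f g)) := (hsum (f g)).symm
    _ = ∑ i, (σ g (e i (x i)) - e i (x i)) := by
      simp only [← Function.comp_apply (f := π _), hx, map_sub, (he _).isIntertwining]
    _ = σ g (∑ i, e i (x i)) - ∑ i, e i (x i) := by rw [map_sum, Finset.sum_sub_distrib]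

theorem H1Vanishes.of_bijective {σ : Representation k G W} (hρ : ρ.H1Vanishes) (e : V →ₗ[k] W)
    (he : IsIntertwiningMap ρ σ e) (he_bij : Function.Bijective e) : σ.H1Vanishes := by
  intro f hf
  choose f' hf' using fun g => he_bij.2 (f g)
  obtain ⟨x, hx⟩ := hρ f' fun g h => he_bij.1 <| by
    simp only [hf', hf g h, map_add, he.isIntertwining]
  exact ⟨e x, fun g => by rw [← hf', hx, map_sub, he.isIntertwining]⟩

theorem IsCocycle₁.sub_coboundary {f : G → V} (hf : ρ.IsCocycle₁ f) (x : V) :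
    ρ.IsCocycle₁ fun g => f g - (ρ g x - x) := fun g h => by
  simp only [hf g h, map_mul, Module.End.mul_apply, map_sub]
  abel

end Cocycles

theorem h1Vanishes_iff_subsingleton_H1 {k G V : Type u} [CommRing k] [Group G]
    [AddCommGroup V] [Module k V] (ρ : Representation k G V) :
    ρ.H1Vanishes ↔ Subsingleton (H1 (Rep.of ρ)) := by
  constructor
  · intro h
    suffices H : ∀ x : H1 (Rep.of ρ), x = 0 from ⟨fun a b => (H a).trans (H b).symm⟩
    intro x
    induction x using H1_induction_on with | h f =>
    obtain ⟨x, hx⟩ := h f ((mem_cocycles₁_iff (A := Rep.of ρ) f).1 f.2)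
    exact (H1π_eq_zero_iff _).2 ⟨x, funext fun g => (hx g).symm⟩
  · intro h f hf
    obtain ⟨x, hx⟩ := (H1π_eq_zero_iff (A := Rep.of ρ)
      ⟨f, (mem_cocycles₁_iff (A := Rep.of ρ) f).2 hf⟩).1 (Subsingleton.elim _ _)
    exact ⟨x, fun g => (congr_fun hx g).symm⟩

section Tensor

variable {k G G' V V' : Type*} [CommRing k] [Group G] [Group G'] [AddCommGroup V] [Module k V]
  [AddCommGroup V'] [Module k V'] {ρ : Representation k G V} {ρ' : Representation k G' V'}

theorem tprod_trivial_apply (g : G) : (ρ.tprod (trivial k G V')) g = (ρ g).rTensor V' := rfl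

theorem H1Vanishes.tprod_trivial [Module.Free k V'] [Module.Finite k V'] (hρ : ρ.H1Vanishes) :
    (ρ.tprod (trivial k G V')).H1Vanishes := by
  classical
  let b := Module.Free.chooseBasis k V'
  refine hρ.of_retract (fun i => Finsupp.lapply i ∘ₗ (equivFinsuppOfBasisRight b).toLinearMap)
    (fun i => (TensorProduct.mk k V V').flip (b i)) (fun i => ⟨fun g w => ?_⟩)
    (fun i => ⟨fun g v => rfl⟩) (sum_equivFinsuppOfBasisRight_tmul b)
  exact equivFinsuppOfBasisRight_rTensor_apply b (ρ g) w i

theorem tprod_fst_snd_comp_inl :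
    (tprod (ρ.comp (MonoidHom.fst G G')) (ρ'.comp (MonoidHom.snd G G'))).comp
      (MonoidHom.inl G G') = ρ.tprod (trivial k G V') := by
  ext g : 1
  simp [tprod_apply]
  rfl

theorem invariants_tprod_trivial_le_range_rTensor [Module.Free k V'] :
    (ρ.tprod (trivial k G V')).invariants ≤
      LinearMap.range (ρ.invariants.subtype.rTensor V') := by
  classical
  intro w hw
  let b := Module.Free.chooseBasis k V'
  have hcoeff : ∀ i, equivFinsuppOfBasisRight b w i ∈ ρ.invariants := fun i g => by
    rw [← equivFinsuppOfBasisRight_rTensor_apply, ← tprod_trivial_apply, hw g]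
  rw [← (equivFinsuppOfBasisRight b).symm_apply_apply w, equivFinsuppOfBasisRight_symm_apply]
  exact Submodule.finsuppSum_mem _ _ _ _ fun i _ => ⟨⟨_, hcoeff i⟩ ⊗ₜ b i, rfl⟩

end Tensor

section Prod

variable {k G G' W : Type*} [CommRing k] [Group G] [Group G'] [AddCommGroup W] [Module k W]
  (τ : Representation k (G × G') W)

noncomputable def toInvariantsInl :
    Representation k G' (invariants (τ.comp (MonoidHom.inl G G'))) :=
  subrepresentation (τ.comp (MonoidHom.inr G G')) _ fun g' w hw g => by
    show τ (MonoidHom.inl G G' g) (τ (MonoidHom.inr G G' g') w) = τ (MonoidHom.inr G G' g') w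
    rw [← Module.End.mul_apply, ← map_mul, (MonoidHom.commute_inl_inr g g').eq, map_mul,
      Module.End.mul_apply]
    exact congr_arg (τ _) (hw g)

@[simp]
theorem coe_toInvariantsInl_apply (g' : G') (w : invariants (τ.comp (MonoidHom.inl G G'))) :
    (τ.toInvariantsInl g' w : W) = τ (1, g') w := rfl

variable {τ}

theorem IsCocycle₁.isCoboundary₁_of_forall_inl_eq_zero (h₂ : τ.toInvariantsInl.H1Vanishes)
    {c : G × G' → W} (hc : τ.IsCocycle₁ c) (h0 : ∀ g, c (g, 1) = 0) : τ.IsCoboundary₁ c := by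
  have hc_eq : ∀ g g', c (g, g') = c (1, g') := fun g g' => by
    simpa [h0] using hc (1, g') (g, 1)
  have hmem : ∀ g', c (1, g') ∈ invariants (τ.comp (MonoidHom.inl G G')) := fun g' g => by
    simpa [h0, hc_eq] using (hc (g, 1) (1, g')).symm
  obtain ⟨u, hu⟩ := h₂ (fun g' => ⟨c (1, g'), hmem g'⟩) fun g' h' => Subtype.ext <| by
    simpa using hc (1, g') (1, h')
  refine ⟨u, fun ⟨g, g'⟩ => ?_⟩
  have hfix : τ (g, g') u = τ (1, g') u := by
    rw [show ((g, g') : G × G') = (1, g') * (g, 1) by simp, map_mul, Module.End.mul_apply]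
    exact congr_arg (τ (1, g')) (u.2 g)
  rw [hc_eq, hfix]
  simpa using congr_arg Subtype.val (hu g')

theorem H1Vanishes.of_comp_inl (h₁ : H1Vanishes (τ.comp (MonoidHom.inl G G')))
    (h₂ : τ.toInvariantsInl.H1Vanishes) : τ.H1Vanishes := by
  intro c hc
  obtain ⟨w, hw⟩ := h₁ (c ∘ MonoidHom.inl G G') fun g h => by simpa using hc (g, 1) (h, 1)
  obtain ⟨u, hu⟩ := (hc.sub_coboundary w).isCoboundary₁_of_forall_inl_eq_zero h₂ fun g => by
    simpa using sub_eq_zero.2 (hw g)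
  refine ⟨w + u, fun p => ?_⟩
  have hp : c p - (τ p w - w) = τ p u - u := hu p
  rw [map_add, ← sub_eq_zero, ← sub_eq_zero.2 hp]
  abel

end Prod

section TensorProd

variable {k G G' V V' : Type*} [Field k] [Group G] [Group G'] [AddCommGroup V] [Module k V]
  [AddCommGroup V'] [Module k V'] {ρ : Representation k G V} {ρ' : Representation k G' V'}

theorem H1Vanishes.toInvariantsInl_tprod [FiniteDimensional k V] (h' : ρ'.H1Vanishes) :
    (tprod (ρ.comp (MonoidHom.fst G G'))
      (ρ'.comp (MonoidHom.snd G G'))).toInvariantsInl.H1Vanishes := by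
  set τ := tprod (ρ.comp (MonoidHom.fst G G')) (ρ'.comp (MonoidHom.snd G G'))
  have hτ : τ.comp (MonoidHom.inl G G') = ρ.tprod (trivial k G V') := tprod_fst_snd_comp_inl
  let incl : V' ⊗[k] ρ.invariants →ₗ[k] V ⊗[k] V' :=
    ρ.invariants.subtype.rTensor V' ∘ₗ (_root_.TensorProduct.comm k V' ρ.invariants).toLinearMap
  have hincl_mem : ∀ x, incl x ∈ invariants (τ.comp (MonoidHom.inl G G')) := by
    intro x g
    induction x with
    | zero => simp
    | tmul v' v => simp [incl, τ, tprod_apply, v.2 g]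
    | add x y hx hy => simp_all
  refine (h'.tprod_trivial (V' := ρ.invariants)).of_bijective (incl.codRestrict _ hincl_mem)
    ⟨fun g' x => Subtype.ext ?_⟩ ⟨fun x y hxy => ?_, fun w => ?_⟩
  · induction x with
    | zero => simp
    | tmul v' v => simp [incl, τ, tprod_apply]
    | add x y hx hy => simp_all
  · exact ((Module.Flat.rTensor_preserves_injective_linearMap _
      ρ.invariants.injective_subtype).comp (LinearEquiv.injective _)) (congr_arg Subtype.val hxy)
  · obtain ⟨y, hy⟩ := invariants_tprod_trivial_le_range_rTensor
      (show (w : V ⊗[k] V') ∈ (ρ.tprod (trivial k G V')).invariants from hτ ▸ w.2)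
    exact ⟨(_root_.TensorProduct.comm k V' ρ.invariants).symm y, Subtype.ext (by simp [incl, hy])⟩

end TensorProd

end Representation

/-- If `H¹(G, V) = 0` and `H¹(G', V') = 0`, then the first group cohomology of
the product group `G × G'` with coefficients in the tensor product representation `V ⊗[k] V'`
(where `(g, g') • (v ⊗ v') = ρ g v ⊗ ρ' g' v'`) also vanishes. -/
theorem h1_tensor_product_of_h1_eq_zero
    (k : Type) [Field k] (G G' : Type) [Group G] [Group G']
    (V V' : Type) [AddCommGroup V] [Module k V] [AddCommGroup V'] [Module k V']
    [FiniteDimensional k V] [FiniteDimensional k V']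
    (ρ : Representation k G V) (ρ' : Representation k G' V')
    (h : Subsingleton (groupCohomology.H1 (Rep.of ρ)))
    (h' : Subsingleton (groupCohomology.H1 (Rep.of ρ'))) :
    Subsingleton (groupCohomology.H1 (Rep.of
      (Representation.tprod (ρ.comp (MonoidHom.fst G G')) (ρ'.comp (MonoidHom.snd G G'))))) := by
  rw [← Representation.h1Vanishes_iff_subsingleton_H1] at h h' ⊢
  refine Representation.H1Vanishes.of_comp_inl ?_ h'.toInvariantsInl_tprod
  rw [Representation.tprod_fst_snd_comp_inl]
  exact h.tprod_trivial
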